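/- arXiv:1509.05957 — 4 statements merged into one kernel-verified Lean document; each statement's English description precedes it below -/
import Mathlib

section
/- For every straight-line program (an acyclic context-free grammar where every variable has exactly one production) of size m (the total length of all right-hand sides), the length of the unique string it produces is at most 3^(m/3), and in particular at most 2^m. -/
/-!
Ordering the variables by rank, the expansion of `X` has length at most `|rhs X|` times the
longest expansion of a symbol of `rhs X`, and those symbols only involve variables of smaller
rank. Hence `|val X| ≤ ∏ max 1 |rhs Y|` over the variables `Y` of rank at most that of `X`.
Since `k ^ 3 ≤ 3 ^ k` for all `k`, the cube of this product is at most `3 ^ m`; both bounds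
follow, the second because `3 ≤ 2 ^ 3`.
-/

/-- A straight-line program: an acyclic context-free grammar in which every
variable has exactly one production. -/
structure SLP (V Alph : Type) [Fintype V] where
  /-- the unique right-hand side of each variable -/
  rhs : V → List (V ⊕ Alph)
  /-- the start variable -/
  start : V
  /-- a ranking witnessing acyclicity (a linear order compatible with occurrence) -/
  rank : V → ℕ
  acyclic : ∀ X Y : V, Sum.inl Y ∈ rhs X → rank Y < rank X

/-- The size of an SLP: the total length of all right-hand sides. -/
def SLP.size {V Alph : Type} [Fintype V] (G : SLP V Alph) : ℕ :=
  ∑ X : V, (G.rhs X).length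

/-- `val` is the (unique) evaluation of the SLP: each variable derives the
string obtained by expanding its right-hand side. -/
def SLP.IsEval {V Alph : Type} [Fintype V] (G : SLP V Alph) (val : V → List Alph) : Prop :=
  ∀ X : V, val X = ((G.rhs X).map (Sum.elim val (fun t => [t]))).flatten


open Finset

theorem Nat.pow_three_le_three_pow (n : ℕ) : n ^ 3 ≤ 3 ^ n := by
  rcases lt_or_ge n 3 with hn | hn
  · interval_cases n <;> norm_num
  induction n, hn using Nat.le_induction with
  | base => norm_num
  | succ n hn ih =>
    calc (n + 1) ^ 3 ≤ 3 * n ^ 3 := by nlinarith [sq_nonneg n]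
      _ ≤ 3 * 3 ^ n := Nat.mul_le_mul_left 3 ih
      _ = 3 ^ (n + 1) := by ring

theorem Nat.max_one_pow_three_le_three_pow (n : ℕ) : max 1 n ^ 3 ≤ 3 ^ n := by
  rcases Nat.eq_zero_or_pos n with rfl | hn
  · simp
  · rw [max_eq_right hn]
    exact n.pow_three_le_three_pow

theorem Nat.le_two_pow_of_pow_three_le_three_pow {n m : ℕ} (h : n ^ 3 ≤ 3 ^ m) : n ≤ 2 ^ m := by
  refine (Nat.pow_le_pow_iff_left (by norm_num : 3 ≠ 0)).1 ?_
  calc n ^ 3 ≤ 3 ^ m := h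
    _ ≤ 8 ^ m := Nat.pow_le_pow_left (by norm_num) m
    _ = (2 ^ m) ^ 3 := by rw [← pow_mul, mul_comm, pow_mul]; norm_num

theorem Nat.cast_le_three_rpow_of_pow_three_le_three_pow {n m : ℕ} (h : n ^ 3 ≤ 3 ^ m) :
    (n : ℝ) ≤ 3 ^ ((m : ℝ) / 3) := by
  rw [div_eq_mul_inv, Real.rpow_mul (by norm_num), Real.rpow_natCast,
    Real.le_rpow_inv_iff_of_pos (by positivity) (by positivity) (by norm_num)]
  exact_mod_cast h

theorem List.length_flatten_le_mul {α : Type*} {L : List (List α)} {b : ℕ}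
    (h : ∀ l ∈ L, l.length ≤ b) : L.flatten.length ≤ L.length * b := by
  rw [List.length_flatten]
  simpa using List.sum_le_card_nsmul (L.map List.length) b (by simpa using h)

namespace SLP

variable {V Alph : Type} [Fintype V] {G : SLP V Alph} {val : V → List Alph}

theorem IsEval.length_le_prod (hval : G.IsEval val) (X : V) :
    (val X).length ≤
      ∏ Y ∈ univ.filter (fun Y => G.rank Y ≤ G.rank X), max 1 (G.rhs Y).length := by
  classical
  set S := univ.filter (fun Y => G.rank Y ≤ G.rank X)
  have hXS : X ∈ S := by simp [S]
  have hsymbol : ∀ s ∈ G.rhs X,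
      (Sum.elim val (fun t => [t]) s).length ≤ ∏ Y ∈ S.erase X, max 1 (G.rhs Y).length := by
    rintro (Y | t) hs
    · have hYX := G.acyclic X Y hs
      calc (val Y).length
          ≤ ∏ Z ∈ univ.filter (fun Z => G.rank Z ≤ G.rank Y), max 1 (G.rhs Z).length :=
            hval.length_le_prod Y
        _ ≤ ∏ Z ∈ S.erase X, max 1 (G.rhs Z).length := by
            refine prod_le_prod_of_subset_of_one_le' (fun Z hZ => ?_)
              (fun _ _ _ => le_max_left _ _)
            simp only [mem_filter, mem_univ, true_and] at hZ
            simp only [S, mem_erase, mem_filter, mem_univ, true_and]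
            exact ⟨by rintro rfl; omega, by omega⟩
    · simpa using one_le_prod' fun Z _ => le_max_left 1 (G.rhs Z).length
  calc (val X).length ≤ (G.rhs X).length * ∏ Y ∈ S.erase X, max 1 (G.rhs Y).length := by
        rw [hval X, ← List.length_map (Sum.elim val fun t => [t])]
        exact List.length_flatten_le_mul (List.forall_mem_map.2 hsymbol)
    _ ≤ max 1 (G.rhs X).length * ∏ Y ∈ S.erase X, max 1 (G.rhs Y).length :=
        Nat.mul_le_mul_right _ (le_max_right _ _)
    _ = ∏ Y ∈ S, max 1 (G.rhs Y).length := mul_prod_erase S (fun Y => max 1 (G.rhs Y).length) hXS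
termination_by G.rank X

theorem prod_max_one_pow_three_le (G : SLP V Alph) :
    (∏ Y, max 1 (G.rhs Y).length) ^ 3 ≤ 3 ^ G.size := by
  rw [← prod_pow, size, ← prod_pow_eq_pow_sum]
  exact prod_le_prod' fun Y _ => Nat.max_one_pow_three_le_three_pow _

theorem IsEval.length_pow_three_le (hval : G.IsEval val) (X : V) :
    (val X).length ^ 3 ≤ 3 ^ G.size := by
  refine le_trans (Nat.pow_le_pow_left ?_ 3) G.prod_max_one_pow_three_le
  exact (hval.length_le_prod X).trans
    (prod_le_prod_of_subset_of_one_le' (filter_subset _ _) fun _ _ _ => le_max_left _ _)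

end SLP

/-- The string produced by an SLP of size m has length at most 3^(m/3) ≤ 2^m. -/
theorem slp_length_bound (V Alph : Type) [Fintype V] (G : SLP V Alph)
    (val : V → List Alph) (hval : G.IsEval val) :
    ((val G.start).length : ℝ) ≤ 3 ^ ((G.size : ℝ) / 3) ∧
    (val G.start).length ≤ 2 ^ G.size := by
  have h := hval.length_pow_three_le G.start
  exact ⟨Nat.cast_le_three_rpow_of_pow_three_le_three_pow h,
    Nat.le_two_pow_of_pow_three_le_three_pow h⟩
end

section
/- Levi's lemma for trace monoids: in the trace monoid M(A,I), for traces u₁,...,u_m, v₁,...,v_n, the equality u₁u₂⋯u_m = v₁v₂⋯v_n holds if and only if there exist traces w_{i,j} (1 ≤ i ≤ m, 1 ≤ j ≤ n) such that u_i = w_{i,1}w_{i,2}⋯w_{i,n} for each i, v_j = w_{1,j}w_{2,j}⋯w_{m,j} for each j, and w_{i,j} commutes letterwise with w_{k,ℓ} (every letter of one is independent of every letter of the other) whenever i < k and j > ℓ. -/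
/-- The commutation relation on words generated by an independence relation. -/
def traceRel (A : Type) (I : A → A → Prop) : FreeMonoid A → FreeMonoid A → Prop :=
  fun x y => ∃ a b, I a b ∧ x = FreeMonoid.of a * FreeMonoid.of b ∧ y = FreeMonoid.of b * FreeMonoid.of a

/-- The trace congruence ≡_I. -/
def traceCon (A : Type) (I : A → A → Prop) : Con (FreeMonoid A) := conGen (traceRel A I)

/-- The trace monoid M(A,I). -/
abbrev Trace (A : Type) (I : A → A → Prop) := (traceCon A I).Quotient

/-- The trace represented by a word. -/
def trc (A : Type) (I : A → A → Prop) (w : FreeMonoid A) : Trace A I := (traceCon A I).mk' w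

/-- s I t: every letter of s is independent of every letter of t. -/
def TraceIndep (A : Type) (I : A → A → Prop) (s t : Trace A I) : Prop :=
  ∀ w w' : FreeMonoid A, s = trc A I w → t = trc A I w' →
    ∀ a ∈ w.toList, ∀ b ∈ w'.toList, I a b

/-- A trace is connected if it has no nontrivial factorization into independent factors. -/
def TraceConnected (A : Type) (I : A → A → Prop) (t : Trace A I) : Prop :=
  ∀ u v : Trace A I, t = u * v → TraceIndep A I u v → u = 1 ∨ v = 1

/-- The set of prefixes of a trace. -/
def tracePrefixes (A : Type) (I : A → A → Prop) (t : Trace A I) : Set (Trace A I) :=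
  {p | ∃ q, t = p * q}

/-!
Two words represent the same trace iff they are joined by a chain of swaps of adjacent
independent letters. Following the first letter `a` of a word for `a t` through such a chain
shows that whenever `a t = s₁ s₂`, either `s₁ = a s₁'` and `t = s₁' s₂`, or `a` is independent
of `s₁`, `s₂ = a s₂'` and `t = s₁ s₂'`. Peeling off the letters of `t₁` one at a time this gives
Levi's lemma for `t₁ t₂ = s₁ s₂`, and induction on the number of factors, first on one side and
then on the other, gives the `m × n` grid. Conversely, independent traces commute, so the grid can
be multiplied out row by row or column by column.
-/

theorem List.prod_ofFn_mul_prod_ofFn {M : Type*} [Monoid M] {n : ℕ} (a b : Fin n → M)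
    (h : ∀ j l, l < j → Commute (a j) (b l)) :
    (ofFn a).prod * (ofFn b).prod = (ofFn fun j => a j * b j).prod := by
  induction n with
  | zero => simp
  | succ n ih =>
    have hb₀ : Commute (ofFn fun j => a j.succ).prod (b 0) :=
      .list_prod_left _ _ fun _ hx => by
        obtain ⟨j, rfl⟩ := mem_ofFn.1 hx
        exact h j.succ 0 j.succ_pos
    simp only [ofFn_succ, prod_cons]
    rw [← ih _ _ fun j l hlj => h j.succ l.succ (Fin.succ_lt_succ_iff.2 hlj), mul_assoc,
      hb₀.left_comm, mul_assoc]

theorem List.prod_ofFn_prod_ofFn_comm {M : Type*} [Monoid M] {m n : ℕ} (w : Fin m → Fin n → M)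
    (h : ∀ i k j l, i < k → l < j → Commute (w i j) (w k l)) :
    (ofFn fun i => (ofFn (w i)).prod).prod = (ofFn fun j => (ofFn fun i => w i j).prod).prod := by
  induction m with
  | zero => simp
  | succ m ih =>
    rw [ofFn_succ, prod_cons,
      ih _ fun i k j l hik => h i.succ k.succ j l (Fin.succ_lt_succ_iff.2 hik),
      prod_ofFn_mul_prod_ofFn]
    · simp only [ofFn_succ, prod_cons]
    · exact fun j l hlj => .list_prod_right _ _ fun _ hx => by
        obtain ⟨i, rfl⟩ := mem_ofFn.1 hx
        exact h 0 i.succ j l i.succ_pos hlj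

theorem List.append_cons_eq_append_cons_cons {A : Type*} {p q l r : List A} {a c d : A}
    (h : p ++ a :: q = l ++ c :: d :: r) :
    (∃ r₁, p = l ++ c :: d :: r₁ ∧ r = r₁ ++ a :: q) ∨
    (p = l ++ [c] ∧ a = d ∧ q = r) ∨
    (l = p ∧ c = a ∧ q = d :: r) ∨
    (∃ q₁, l = p ++ a :: q₁ ∧ q = q₁ ++ c :: d :: r) := by
  rcases List.append_eq_append_iff.1 h with
    ⟨_ | ⟨x, q₁⟩, rfl, h'⟩ | ⟨_ | ⟨x, _ | ⟨y, r₁⟩⟩, rfl, h'⟩ <;> simp_all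

theorem List.append_eq_append_cons {A : Type*} {x y p q : List A} {a : A}
    (h : x ++ y = p ++ a :: q) :
    (∃ p₂, p = x ++ p₂ ∧ y = p₂ ++ a :: q) ∨ (∃ q₁, x = p ++ a :: q₁ ∧ q = q₁ ++ y) := by
  rcases List.append_eq_append_iff.1 h with h | ⟨_ | ⟨b, q₁⟩, rfl, h'⟩
  · exact .inl h
  · exact .inl ⟨[], by simp_all⟩
  · simp_all

namespace Trace

variable {A : Type} {I : A → A → Prop}

def Step (I : A → A → Prop) (x y : List A) : Prop :=
  ∃ (l r : List A) (a b : A), I a b ∧ x = l ++ a :: b :: r ∧ y = l ++ b :: a :: r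

abbrev Steps (I : A → A → Prop) : List A → List A → Prop := Relation.ReflTransGen (Step I)

theorem Step.perm {x y : List A} (h : Step I x y) : x.Perm y := by
  obtain ⟨l, r, a, b, -, rfl, rfl⟩ := h
  exact (List.Perm.swap b a r).append_left l

theorem Steps.perm {x y : List A} (h : Steps I x y) : x.Perm y := by
  induction h with
  | refl => rfl
  | tail _ hstep ih => exact ih.trans hstep.perm

theorem Steps.symm (hsym : ∀ a b, I a b → I b a) {x y : List A} (h : Steps I x y) :
    Steps I y x :=
  Relation.ReflTransGen.mono (fun _ _ ⟨l, r, a, b, hab, hx, hy⟩ =>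
    ⟨l, r, b, a, hsym a b hab, hy, hx⟩) _ _ (Relation.ReflTransGen.swap _ _ h)

theorem Steps.append {x y x' y' : List A} (h : Steps I x y) (h' : Steps I x' y') :
    Steps I (x ++ x') (y ++ y') := by
  refine (h.lift (· ++ x') ?_).trans (h'.lift (y ++ ·) ?_)
  · rintro _ _ ⟨l, r, a, b, hab, rfl, rfl⟩
    exact ⟨l, r ++ x', a, b, hab, by simp, by simp⟩
  · rintro _ _ ⟨l, r, a, b, hab, rfl, rfl⟩
    exact ⟨y ++ l, r, a, b, hab, by simp, by simp⟩

def stepsCon (I : A → A → Prop) (hsym : ∀ a b, I a b → I b a) : Con (FreeMonoid A) where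
  r x y := Steps I x.toList y.toList
  iseqv := ⟨fun _ => .refl, Steps.symm hsym, .trans⟩
  mul' h h' := by simpa only [FreeMonoid.toList_mul] using h.append h'

/-- Follow the letter `a` through the swaps: every letter that overtakes it is independent of it. -/
theorem Steps.exists_eq_append_cons {a : A} {w v : List A} (h : Steps I (a :: w) v) :
    ∃ p q, v = p ++ a :: q ∧ (∀ b ∈ p, I a b) ∧ Steps I w (p ++ q) := by
  induction h with
  | refl => exact ⟨[], w, rfl, by simp, .refl⟩
  | tail _ hstep ih =>
    obtain ⟨p, q, rfl, hp, hw⟩ := ih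
    obtain ⟨l, r, c, d, hcd, hv, rfl⟩ := hstep
    rcases List.append_cons_eq_append_cons_cons hv with
      ⟨r₁, rfl, rfl⟩ | ⟨rfl, rfl, rfl⟩ | ⟨rfl, rfl, rfl⟩ | ⟨q₁, rfl, rfl⟩
    · refine ⟨l ++ d :: c :: r₁, q, by simp, fun b hb => hp b ?_,
        hw.tail ⟨l, r₁ ++ q, c, d, hcd, by simp, by simp⟩⟩
      simp only [List.mem_append, List.mem_cons] at hb ⊢
      tauto
    · exact ⟨l, c :: q, by simp, by simp_all, by simpa using hw⟩
    · exact ⟨l ++ [d], r, by simp, by simpa [or_imp, forall_and] using ⟨hp, hcd⟩,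
        by simpa using hw⟩
    · exact ⟨p, q₁ ++ d :: c :: r, by simp, hp, hw.tail ⟨p ++ q₁, r, c, d, hcd, by simp, by simp⟩⟩

def ofList (I : A → A → Prop) (l : List A) : Trace A I := trc A I (FreeMonoid.ofList l)

theorem ofList_append (l l' : List A) : ofList I (l ++ l') = ofList I l * ofList I l' := by
  rw [ofList, FreeMonoid.ofList_append]; exact map_mul _ _ _

theorem ofList_nil : ofList I ([] : List A) = 1 := map_one _

theorem exists_eq_ofList (t : Trace A I) : ∃ l : List A, t = ofList I l := by
  obtain ⟨w, rfl⟩ := Con.mk'_surjective (c := traceCon A I) t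
  exact ⟨w.toList, rfl⟩

theorem ofList_cons (a : A) (l : List A) : ofList I (a :: l) = ofList I [a] * ofList I l :=
  ofList_append [a] l

theorem commute_ofList_singleton {a b : A} (hab : I a b) :
    Commute (ofList I [a]) (ofList I [b]) := by
  rw [Commute, SemiconjBy, ← ofList_append, ← ofList_append]
  exact (Con.eq _).2 (ConGen.Rel.of _ _ ⟨a, b, hab, rfl, rfl⟩)

theorem ofList_eq_ofList_of_steps {l l' : List A} (h : Steps I l l') :
    ofList I l = ofList I l' := by
  induction h with
  | refl => rfl
  | tail _ hstep ih =>
    obtain ⟨l₀, r, a, b, hab, rfl, rfl⟩ := hstep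
    rw [ih, ofList_append, ofList_append l₀, ofList_cons a (b :: r), ofList_cons b r,
      ofList_cons b (a :: r), ofList_cons a r, (commute_ofList_singleton hab).left_comm]

theorem commute_ofList {x y : List A} (h : ∀ a ∈ x, ∀ b ∈ y, I a b) :
    Commute (ofList I x) (ofList I y) := by
  induction x with
  | nil => simp [ofList_nil]
  | cons a x ihx =>
    rw [ofList_cons]
    refine .mul_left ?_ (ihx fun a' ha' => h a' (List.mem_cons_of_mem a ha'))
    clear ihx
    induction y with
    | nil => simp [ofList_nil]
    | cons b y ihy =>
      rw [ofList_cons]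
      exact .mul_right (commute_ofList_singleton (h a (by simp) b (by simp)))
        (ihy fun a' ha' b' hb' => h a' ha' b' (List.mem_cons_of_mem b hb'))

theorem steps_of_ofList_eq_ofList (hsym : ∀ a b, I a b → I b a) {l l' : List A}
    (h : ofList I l = ofList I l') : Steps I l l' :=
  (Con.conGen_le (c := stepsCon I hsym)).2
    (fun _ _ ⟨a, b, hab, hx, hy⟩ => .single ⟨[], [], a, b, hab, hx, hy⟩) ((Con.eq _).1 h)

theorem mul_eq_one_iff (hsym : ∀ a b, I a b → I b a) {s t : Trace A I} :
    s * t = 1 ↔ s = 1 ∧ t = 1 := by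
  refine ⟨fun h => ?_, fun ⟨hs, ht⟩ => by rw [hs, ht, one_mul]⟩
  obtain ⟨x, rfl⟩ := exists_eq_ofList s
  obtain ⟨y, rfl⟩ := exists_eq_ofList t
  rw [← ofList_append, ← ofList_nil] at h
  obtain ⟨rfl, rfl⟩ := List.append_eq_nil_iff.1 (steps_of_ofList_eq_ofList hsym h).perm.eq_nil
  exact ⟨ofList_nil, ofList_nil⟩

theorem traceIndep_ofList_iff (hsym : ∀ a b, I a b → I b a) {x y : List A} :
    TraceIndep A I (ofList I x) (ofList I y) ↔ ∀ a ∈ x, ∀ b ∈ y, I a b := by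
  refine ⟨fun h => h _ _ rfl rfl, fun h w w' hw hw' a ha b hb => ?_⟩
  have hx := (steps_of_ofList_eq_ofList (l' := w.toList) hsym hw).perm
  have hy := (steps_of_ofList_eq_ofList (l' := w'.toList) hsym hw').perm
  exact h a (hx.mem_iff.2 ha) b (hy.mem_iff.2 hb)

theorem traceIndep_one_left (hsym : ∀ a b, I a b → I b a) (t : Trace A I) :
    TraceIndep A I 1 t := by
  obtain ⟨y, rfl⟩ := exists_eq_ofList t
  rw [← ofList_nil, traceIndep_ofList_iff hsym]
  simp

theorem traceIndep_one_right (hsym : ∀ a b, I a b → I b a) (s : Trace A I) :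
    TraceIndep A I s 1 := by
  obtain ⟨x, rfl⟩ := exists_eq_ofList s
  rw [← ofList_nil, traceIndep_ofList_iff hsym]
  simp

theorem traceIndep_mul_left_iff (hsym : ∀ a b, I a b → I b a) {s s' t : Trace A I} :
    TraceIndep A I (s * s') t ↔ TraceIndep A I s t ∧ TraceIndep A I s' t := by
  obtain ⟨x, rfl⟩ := exists_eq_ofList s
  obtain ⟨x', rfl⟩ := exists_eq_ofList s'
  obtain ⟨y, rfl⟩ := exists_eq_ofList t
  simp only [← ofList_append, traceIndep_ofList_iff hsym, List.mem_append, or_imp, forall_and]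

theorem traceIndep_mul_right_iff (hsym : ∀ a b, I a b → I b a) {s t t' : Trace A I} :
    TraceIndep A I s (t * t') ↔ TraceIndep A I s t ∧ TraceIndep A I s t' := by
  obtain ⟨x, rfl⟩ := exists_eq_ofList s
  obtain ⟨y, rfl⟩ := exists_eq_ofList t
  obtain ⟨y', rfl⟩ := exists_eq_ofList t'
  simp only [← ofList_append, traceIndep_ofList_iff hsym, List.mem_append, or_imp, forall_and]

theorem traceIndep_prod_left_iff (hsym : ∀ a b, I a b → I b a) {L : List (Trace A I)}
    {t : Trace A I} : TraceIndep A I L.prod t ↔ ∀ s ∈ L, TraceIndep A I s t := by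
  induction L with
  | nil => simpa using traceIndep_one_left hsym t
  | cons s L ih => simp [traceIndep_mul_left_iff hsym, ih]

theorem traceIndep_prod_right_iff (hsym : ∀ a b, I a b → I b a) {L : List (Trace A I)}
    {s : Trace A I} : TraceIndep A I s L.prod ↔ ∀ t ∈ L, TraceIndep A I s t := by
  induction L with
  | nil => simpa using traceIndep_one_right hsym s
  | cons t L ih => simp [traceIndep_mul_right_iff hsym, ih]

theorem _root_.TraceIndep.commute {s t : Trace A I} (h : TraceIndep A I s t) : Commute s t := by
  obtain ⟨x, rfl⟩ := exists_eq_ofList s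
  obtain ⟨y, rfl⟩ := exists_eq_ofList t
  exact commute_ofList (h _ _ rfl rfl)

theorem letter_mul_eq_mul_cases (hsym : ∀ a b, I a b → I b a) {a : A} {t s₁ s₂ : Trace A I}
    (h : ofList I [a] * t = s₁ * s₂) :
    (∃ s₁', s₁ = ofList I [a] * s₁' ∧ t = s₁' * s₂) ∨
      (TraceIndep A I (ofList I [a]) s₁ ∧ ∃ s₂', s₂ = ofList I [a] * s₂' ∧ t = s₁ * s₂') := by
  obtain ⟨w, rfl⟩ := exists_eq_ofList t
  obtain ⟨y₁, rfl⟩ := exists_eq_ofList s₁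
  obtain ⟨y₂, rfl⟩ := exists_eq_ofList s₂
  rw [← ofList_cons, ← ofList_append] at h
  obtain ⟨p, q, hsplit, hp, hw⟩ := (steps_of_ofList_eq_ofList hsym h).exists_eq_append_cons
  have hw := ofList_eq_ofList_of_steps hw
  rcases List.append_eq_append_cons hsplit with ⟨p₂, rfl, rfl⟩ | ⟨q₁, rfl, rfl⟩
  · have hp₂ : Commute (ofList I p₂) (ofList I [a]) :=
      (commute_ofList (by simpa using fun b hb => hp b (List.mem_append_right y₁ hb))).symm
    have hy₁ : TraceIndep A I (ofList I [a]) (ofList I y₁) :=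
      (traceIndep_ofList_iff hsym).2 (by simpa using fun b hb => hp b (List.mem_append_left p₂ hb))
    refine .inr ⟨hy₁, ofList I (p₂ ++ q), ?_, by simpa [ofList_append, mul_assoc] using hw⟩
    rw [ofList_append, ofList_cons, ofList_append, hp₂.left_comm]
  · have hp' : Commute (ofList I p) (ofList I [a]) := (commute_ofList (by simpa using hp)).symm
    refine .inl ⟨ofList I (p ++ q₁), ?_, by simpa [ofList_append, mul_assoc] using hw⟩
    rw [ofList_append, ofList_cons, ofList_append, hp'.left_comm]

theorem levi_mul_eq_mul (hsym : ∀ a b, I a b → I b a) {t₁ t₂ s₁ s₂ : Trace A I}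
    (h : t₁ * t₂ = s₁ * s₂) :
    ∃ p q r s, t₁ = p * q ∧ t₂ = r * s ∧ s₁ = p * r ∧ s₂ = q * s ∧ TraceIndep A I q r := by
  obtain ⟨x, rfl⟩ := exists_eq_ofList t₁
  induction x generalizing t₂ s₁ s₂ with
  | nil =>
    rw [ofList_nil, one_mul] at h
    exact ⟨1, 1, s₁, s₂, by rw [ofList_nil, one_mul], h, (one_mul _).symm, (one_mul _).symm,
      traceIndep_one_left hsym s₁⟩
  | cons a x ih =>
    rw [ofList_cons, mul_assoc] at h
    rcases letter_mul_eq_mul_cases hsym h with ⟨s₁', rfl, h'⟩ | ⟨ha, s₂', rfl, h'⟩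
    · obtain ⟨p, q, r, s, hx, ht₂, hs₁', hs₂, hqr⟩ := ih h'
      exact ⟨ofList I [a] * p, q, r, s, by rw [ofList_cons, hx, mul_assoc], ht₂,
        by rw [hs₁', mul_assoc], hs₂, hqr⟩
    · obtain ⟨p, q, r, s, hx, ht₂, rfl, hs₂', hqr⟩ := ih h'
      obtain ⟨hap, har⟩ := (traceIndep_mul_right_iff hsym).1 ha
      exact ⟨p, ofList I [a] * q, r, s, by rw [ofList_cons, hx, hap.commute.left_comm], ht₂, rfl,
        by rw [hs₂', mul_assoc], (traceIndep_mul_left_iff hsym).2 ⟨har, hqr⟩⟩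

theorem prod_eq_one_iff (hsym : ∀ a b, I a b → I b a) {L : List (Trace A I)} :
    L.prod = 1 ↔ ∀ t ∈ L, t = 1 := by
  induction L with
  | nil => simp
  | cons t L ih => simp [mul_eq_one_iff hsym, ih]

theorem levi_mul_eq_prod (hsym : ∀ a b, I a b → I b a) {n : ℕ} {t r : Trace A I}
    {v : Fin n → Trace A I} (h : t * r = (List.ofFn v).prod) :
    ∃ x y : Fin n → Trace A I, t = (List.ofFn x).prod ∧ r = (List.ofFn y).prod ∧
      (∀ j, v j = x j * y j) ∧ ∀ j l, l < j → TraceIndep A I (x j) (y l) := by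
  induction n generalizing t r with
  | zero =>
    obtain ⟨rfl, rfl⟩ := (mul_eq_one_iff hsym).1 h
    exact ⟨finZeroElim, finZeroElim, by simp, by simp, finZeroElim, finZeroElim⟩
  | succ n ih =>
    rw [List.ofFn_succ, List.prod_cons] at h
    obtain ⟨p, q, r₀, s, rfl, rfl, hv₀, hqs, hqr⟩ := levi_mul_eq_mul hsym h
    obtain ⟨x, y, rfl, rfl, hv, hxy⟩ := ih hqs.symm
    refine ⟨Fin.cons p x, Fin.cons r₀ y, by simp [List.ofFn_succ], by simp [List.ofFn_succ],
      Fin.cases hv₀ hv, ?_⟩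
    intro j l hlj
    induction j using Fin.cases with
    | zero => exact absurd hlj (Fin.not_lt_zero l)
    | succ j =>
      induction l using Fin.cases with
      | zero => simpa using (traceIndep_prod_left_iff hsym).1 hqr _ (List.mem_ofFn.2 ⟨j, rfl⟩)
      | succ l => simpa using hxy j l (Fin.succ_lt_succ_iff.1 hlj)

theorem levi_prod_eq_prod (hsym : ∀ a b, I a b → I b a) {m n : ℕ} {u : Fin m → Trace A I}
    {v : Fin n → Trace A I} (h : (List.ofFn u).prod = (List.ofFn v).prod) :
    ∃ w : Fin m → Fin n → Trace A I,
      (∀ i, u i = (List.ofFn (w i)).prod) ∧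
      (∀ j, v j = (List.ofFn (fun i => w i j)).prod) ∧
      ∀ i k j l, i < k → l < j → TraceIndep A I (w i j) (w k l) := by
  induction m generalizing v with
  | zero =>
    have hv := (prod_eq_one_iff hsym).1 (by simpa using h.symm)
    exact ⟨finZeroElim, finZeroElim, fun j => by simpa using hv _ (List.mem_ofFn.2 ⟨j, rfl⟩),
      finZeroElim⟩
  | succ m ih =>
    rw [List.ofFn_succ, List.prod_cons] at h
    obtain ⟨x, y, hx, hy, hv, hxy⟩ := levi_mul_eq_prod hsym h
    obtain ⟨w, hrow, hcol, hind⟩ := ih hy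
    refine ⟨Fin.cons x w, Fin.cases hx hrow, fun j => by simp [List.ofFn_succ, hv, hcol], ?_⟩
    intro i k j l hik hlj
    induction k using Fin.cases with
    | zero => exact absurd hik (Fin.not_lt_zero i)
    | succ k =>
      induction i using Fin.cases with
      | zero =>
        have hcolumn := (traceIndep_prod_right_iff hsym).1 (hcol l ▸ hxy j l hlj)
        simpa using hcolumn _ (List.mem_ofFn.2 ⟨k, rfl⟩)
      | succ i => simpa using hind i k j l (Fin.succ_lt_succ_iff.1 hik) hlj

end Trace

theorem levi_lemma_traces_general (A : Type) (I : A → A → Prop)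
    (hsym : ∀ a b, I a b → I b a)
    (m n : ℕ) (u : Fin m → Trace A I) (v : Fin n → Trace A I) :
    (List.ofFn u).prod = (List.ofFn v).prod ↔
      ∃ w : Fin m → Fin n → Trace A I,
        (∀ i, u i = (List.ofFn (w i)).prod) ∧
        (∀ j, v j = (List.ofFn (fun i => w i j)).prod) ∧
        (∀ (i k : Fin m) (j l : Fin n), i < k → l < j →
          TraceIndep A I (w i j) (w k l)) := by
  refine ⟨Trace.levi_prod_eq_prod hsym, fun ⟨w, hrow, hcol, hind⟩ => ?_⟩
  calc (List.ofFn u).prod = (List.ofFn fun i => (List.ofFn (w i)).prod).prod := by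
        rw [funext hrow]
    _ = (List.ofFn fun j => (List.ofFn fun i => w i j).prod).prod :=
      List.prod_ofFn_prod_ofFn_comm w fun i k j l hik hlj => (hind i k j l hik hlj).commute
    _ = (List.ofFn v).prod := by rw [funext hcol]

/-- Levi's lemma for trace monoids. -/
theorem levi_lemma_traces (A : Type) [Fintype A] (I : A → A → Prop)
    (hirr : ∀ a, ¬ I a a) (hsym : ∀ a b, I a b → I b a)
    (m n : ℕ) (u : Fin m → Trace A I) (v : Fin n → Trace A I) :
    (List.ofFn u).prod = (List.ofFn v).prod ↔
      ∃ w : Fin m → Fin n → Trace A I,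
        (∀ i, u i = (List.ofFn (w i)).prod) ∧
        (∀ j, v j = (List.ofFn (fun i => w i j)).prod) ∧
        (∀ (i k : Fin m) (j l : Fin n), i < k → l < j →
          TraceIndep A I (w i j) (w k l)) :=
  levi_lemma_traces_general A I hsym m n u v
end

section
/- The trace monoid M(A,I) is cancellative: for all traces s, t, u, v ∈ M(A,I), if usv = utv then s = t. -/
/-! Projection lemma: two words represent the same trace iff their projections onto every pair
`{a, b}` of dependent letters agree. The projections are morphisms into free monoids, which are
cancellative, so cancellation passes from the free monoids to `M(A,I)`. -/

namespace TraceMonoid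

variable {A : Type} {I : A → A → Prop}

open FreeMonoid

lemma traceCon_of_mul_of {a b : A} (h : I a b) : traceCon A I (of a * of b) (of b * of a) :=
  ConGen.Rel.of _ _ ⟨a, b, h, rfl, rfl⟩

lemma traceCon_mul_of (c : A) {p : FreeMonoid A} (hp : ∀ d ∈ p, I c d) :
    traceCon A I (p * of c) (of c * p) := by
  induction p using FreeMonoid.inductionOn' with
  | one => rw [one_mul, mul_one]; exact (traceCon A I).refl _
  | of_mul d p ih =>
    have hcd : I c d := hp d (mem_mul.2 (Or.inl mem_of_self))
    have hpc := ih fun e he ↦ hp e (mem_mul.2 (Or.inr he))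
    have hdp : traceCon A I (of d * p * of c) (of d * (of c * p)) := by
      rw [mul_assoc]; exact (traceCon A I).mul ((traceCon A I).refl _) hpc
    refine hdp.trans ?_
    rw [← mul_assoc, ← mul_assoc]
    exact (traceCon A I).mul ((traceCon A I).symm (traceCon_of_mul_of hcd)) ((traceCon A I).refl p)

lemma exists_eq_mul_of_mul_of_notMem {c : A} {w : FreeMonoid A} (hc : c ∈ w) :
    ∃ p q, w = p * of c * q ∧ c ∉ p := by
  induction w using FreeMonoid.inductionOn' with
  | one => exact absurd hc notMem_one
  | of_mul d w ih =>
    by_cases hdc : d = c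
    · exact ⟨1, w, by rw [hdc, one_mul], notMem_one⟩
    · obtain ⟨p, q, rfl, hcp⟩ := ih ((mem_mul.1 hc).resolve_left (mt mem_of.1 (Ne.symm hdc)))
      refine ⟨of d * p, q, by simp only [mul_assoc], ?_⟩
      simp [mem_mul, mem_of, Ne.symm hdc, hcp]

lemma mem_of_of_mul_eq_mul {c : A} {x y z : FreeMonoid A} (h : of c * x = y * z) (hy : y ≠ 1) :
    c ∈ y := by
  cases y with
  | one => exact absurd rfl hy
  | of_mul e y =>
    rw [mul_assoc] at h
    obtain ⟨rfl, -⟩ := List.cons_eq_cons.1 (congrArg toList h)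
    exact mem_mul.2 (Or.inl mem_of_self)

section Projection

variable [DecidableEq A]

def proj (a b : A) : FreeMonoid A →* FreeMonoid A :=
  lift fun c ↦ if c = a ∨ c = b then of c else 1

lemma proj_of (a b c : A) : proj a b (of c) = if c = a ∨ c = b then of c else 1 := rfl

lemma mem_proj {a b c : A} {w : FreeMonoid A} : c ∈ proj a b w ↔ c ∈ w ∧ (c = a ∨ c = b) := by
  induction w using FreeMonoid.inductionOn' with
  | one => simp [notMem_one]
  | of_mul d w ih =>
    rw [map_mul, mem_mul, mem_mul, ih, proj_of]
    split_ifs with hd <;> simp only [mem_of, notMem_one] <;> grind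

lemma traceCon_le_ker_proj (hsym : ∀ a b, I a b → I b a) {a b : A} (hab : ¬ I a b) :
    traceCon A I ≤ Con.ker (proj a b) := by
  refine Con.conGen_le.2 fun x y ⟨c, d, hcd, hx, hy⟩ ↦ ?_
  rw [Con.ker_rel, hx, hy, map_mul, map_mul, proj_of, proj_of]
  split_ifs with hc hd hd
  · obtain rfl | rfl := hc <;> obtain rfl | rfl := hd
    all_goals first | rfl | exact absurd hcd hab | exact absurd (hsym _ _ hcd) hab
  all_goals simp only [mul_one, one_mul]

lemma mem_iff_mem_of_proj_self_eq {c : A} {w w' : FreeMonoid A} (h : proj c c w = proj c c w') :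
    c ∈ w ↔ c ∈ w' := by
  simpa [mem_proj] using congrArg (c ∈ ·) h

theorem traceCon_of_proj_eq (hirr : ∀ a, ¬ I a a) (hsym : ∀ a b, I a b → I b a)
    {w w' : FreeMonoid A} (h : ∀ a b, ¬ I a b → proj a b w = proj a b w') :
    traceCon A I w w' := by
  induction w using FreeMonoid.inductionOn' generalizing w' with
  | one =>
    cases w' with
    | one => exact (traceCon A I).refl 1
    | of_mul e w' =>
      have := (mem_iff_mem_of_proj_self_eq (h e e (hirr e))).2 (mem_mul.2 (Or.inl mem_of_self))
      exact absurd this notMem_one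
  | of_mul c w ih =>
    -- The first occurrence of `c` in `w'` can be moved to the front: a letter `d` before it that
    -- depends on `c` would make the `{c, d}`-projections of the two words start differently.
    have hc := (mem_iff_mem_of_proj_self_eq (h c c (hirr c))).1 (mem_mul.2 (Or.inl mem_of_self))
    obtain ⟨p, q, rfl, hcp⟩ := exists_eq_mul_of_mul_of_notMem hc
    have hpc : ∀ d ∈ p, I c d := by
      intro d hd
      by_contra hcd
      have hdp : d ∈ proj c d p := mem_proj.2 ⟨hd, Or.inr rfl⟩
      have hcdw := h c d hcd
      rw [map_mul, map_mul, map_mul, proj_of, if_pos (Or.inl rfl), mul_assoc] at hcdw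
      exact hcp (mem_proj.1 (mem_of_of_mul_eq_mul hcdw fun h1 ↦ notMem_one (h1 ▸ hdp))).1
    have hw' : traceCon A I (p * of c * q) (of c * (p * q)) := by
      rw [← mul_assoc]
      exact (traceCon A I).mul (traceCon_mul_of c hpc) ((traceCon A I).refl q)
    have hproj : ∀ a b, ¬ I a b → proj a b w = proj a b (p * q) := fun a b hab ↦ by
      have := (h a b hab).trans ((Con.ker_rel _).1 (traceCon_le_ker_proj hsym hab hw'))
      rwa [map_mul, map_mul, mul_right_inj] at this
    exact ((traceCon A I).mul ((traceCon A I).refl (of c)) (ih hproj)).trans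
      ((traceCon A I).symm hw')

theorem traceCon_iff_proj_eq (hirr : ∀ a, ¬ I a a) (hsym : ∀ a b, I a b → I b a)
    {w w' : FreeMonoid A} :
    traceCon A I w w' ↔ ∀ a b, ¬ I a b → proj a b w = proj a b w' :=
  ⟨fun h _ _ hab ↦ (Con.ker_rel _).1 (traceCon_le_ker_proj hsym hab h),
    traceCon_of_proj_eq hirr hsym⟩

end Projection

end TraceMonoid

theorem trace_monoid_cancellative_general (A : Type) (I : A → A → Prop)
    (hirr : ∀ a, ¬ I a a) (hsym : ∀ a b, I a b → I b a)
    (s t u v : Trace A I) (h : u * s * v = u * t * v) : s = t := by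
  classical
  induction s using Con.induction_on
  induction t using Con.induction_on
  induction u using Con.induction_on
  induction v using Con.induction_on
  simp only [← Con.coe_mul, Con.eq, TraceMonoid.traceCon_iff_proj_eq hirr hsym, map_mul] at h ⊢
  exact fun a b hab ↦ mul_left_cancel (mul_right_cancel (h a b hab))

/-- The trace monoid M(A,I) is cancellative. -/
theorem trace_monoid_cancellative (A : Type) [Fintype A] (I : A → A → Prop)
    (hirr : ∀ a, ¬ I a a) (hsym : ∀ a b, I a b → I b a)
    (s t u v : Trace A I) (h : u * s * v = u * t * v) : s = t :=
  trace_monoid_cancellative_general A I hirr hsym s t u v h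
end

section
/- Let A₁ and A₂ be I-diamond NFAs over alphabet A with n₁ and n₂ states respectively, and suppose A₂ is memorizing. Then there exists an I-diamond NFA with n₁·n₂ states accepting the partially commutative closure [L(A₁)L(A₂)]_I. -/
/-- A nondeterministic finite automaton with a single initial state. -/
structure NFA' (Q A : Type) where
  Δ : Q → A → Q → Prop
  q0 : Q
  F : Set Q

/-- `M.Reaches p w q`: the automaton can go from state p to state q reading w. -/
def NFA'.Reaches {Q A : Type} (M : NFA' Q A) : Q → List A → Q → Prop
  | p, [], q => p = q
  | p, a :: w, q => ∃ r, M.Δ p a r ∧ M.Reaches r w q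

/-- The language accepted by the NFA. -/
def NFA'.lang {Q A : Type} (M : NFA' Q A) : Set (List A) :=
  {w | ∃ q ∈ M.F, M.Reaches M.q0 w q}

/-- An I-diamond NFA. -/
def IDiamond {Q A : Type} (I : A → A → Prop) (M : NFA' Q A) : Prop :=
  ∀ a b p q r, I a b → M.Δ p a q → M.Δ q b r → ∃ q', M.Δ p b q' ∧ M.Δ q' a r

/-- A memorizing NFA: every state is reachable and determines the alphabet of
the words reaching it. -/
def Memorizing {Q A : Type} (M : NFA' Q A) : Prop :=
  (∀ q : Q, ∃ w, M.Reaches M.q0 w q) ∧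
  ∃ α : Q → Set A, ∀ (w : List A) (q : Q), M.Reaches M.q0 w q → α q = {a | a ∈ w}

/-- The partially commutative closure of a language. -/
def pcClosure (A : Type) (I : A → A → Prop) (L : Set (List A)) : Set (List A) :=
  {u | ∃ v ∈ L, traceCon A I (FreeMonoid.ofList u) (FreeMonoid.ofList v)}

/-!
Run `M₁` and `M₂` side by side, with `M₂` carrying the memorized alphabet `α q` of what it has
read. A letter may still be fed to `M₁` after `M₂` has started, provided it is independent of
every letter in `α q`: it then commutes past the part read by `M₂`, so each accepted word is
trace equivalent to some `u v` with `u ∈ L(M₁)` and `v ∈ L(M₂)`, and the same independence is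
what makes the product I-diamond. Conversely, the diamonds let a run swap adjacent independent
letters, so an I-diamond automaton accepts a trace-closed language; the product accepts every
`u v`, hence all of its closure.
-/

variable {A Q Q₁ Q₂ : Type}

open FreeMonoid

namespace NFA'

lemma reaches_append (M : NFA' Q A) (u v : List A) (p q : Q) :
    M.Reaches p (u ++ v) q ↔ ∃ r, M.Reaches p u r ∧ M.Reaches r v q := by
  induction u generalizing p with
  | nil => exact ⟨fun h => ⟨p, rfl, h⟩, fun ⟨_, hpr, h⟩ => hpr ▸ h⟩
  | cons a u ih =>
    show (∃ r, M.Δ p a r ∧ M.Reaches r (u ++ v) q) ↔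
      ∃ s, (∃ r, M.Δ p a r ∧ M.Reaches r u s) ∧ M.Reaches s v q
    simp only [ih]
    exact ⟨fun ⟨r, hr, s, hs, hsq⟩ => ⟨s, ⟨r, hr, hs⟩, hsq⟩,
      fun ⟨s, ⟨r, hr, hs⟩, hsq⟩ => ⟨r, hr, s, hs, hsq⟩⟩

lemma reaches_singleton (M : NFA' Q A) (a : A) (p q : Q) :
    M.Reaches p [a] q ↔ M.Δ p a q :=
  ⟨fun ⟨_, hr, hrq⟩ => (hrq : _ = q) ▸ hr, fun h => ⟨q, h, rfl⟩⟩

lemma reaches_append_singleton (M : NFA' Q A) (w : List A) (a : A) (p q : Q) :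
    M.Reaches p (w ++ [a]) q ↔ ∃ r, M.Reaches p w r ∧ M.Δ r a q := by
  simp only [reaches_append, reaches_singleton]

def reachCon (M : NFA' Q A) : Con (FreeMonoid A) where
  r x y := ∀ p q, M.Reaches p x.toList q ↔ M.Reaches p y.toList q
  iseqv := ⟨fun _ _ _ => Iff.rfl, fun h p q => (h p q).symm,
    fun h h' p q => (h p q).trans (h' p q)⟩
  mul' := by
    intro w x y z h h' p q
    simp only [FreeMonoid.toList_mul, reaches_append]
    exact exists_congr fun r => and_congr (h p r) (h' r q)

end NFA'

lemma IDiamond.reaches_swap {I : A → A → Prop} {M : NFA' Q A} (hM : IDiamond I M)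
    {a b : A} (hab : I a b) {p q : Q} (h : M.Reaches p [a, b] q) : M.Reaches p [b, a] q := by
  obtain ⟨r, hr, s, hs, rfl⟩ := h
  obtain ⟨q', h1, h2⟩ := hM a b p r s hab hr hs
  exact ⟨q', h1, s, h2, rfl⟩

lemma IDiamond.traceCon_le_reachCon {I : A → A → Prop} (hsym : ∀ a b, I a b → I b a)
    {M : NFA' Q A} (hM : IDiamond I M) : traceCon A I ≤ M.reachCon := by
  refine Con.conGen_le.mpr ?_
  rintro x y ⟨a, b, hab, rfl, rfl⟩ p q
  exact ⟨hM.reaches_swap hab, hM.reaches_swap (hsym a b hab)⟩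

lemma IDiamond.lang_traceCon {I : A → A → Prop} (hsym : ∀ a b, I a b → I b a)
    {M : NFA' Q A} (hM : IDiamond I M) {u v : List A}
    (huv : traceCon A I (ofList u) (ofList v)) (hv : v ∈ M.lang) :
    u ∈ M.lang :=
  let ⟨q, hqF, hq⟩ := hv
  ⟨q, hqF, (hM.traceCon_le_reachCon hsym huv M.q0 q).mpr hq⟩

lemma trc_mul {I : A → A → Prop} (x y : FreeMonoid A) : trc A I (x * y) = trc A I x * trc A I y :=
  map_mul _ x y

lemma trc_eq_trc_iff {I : A → A → Prop} {x y : FreeMonoid A} :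
    trc A I x = trc A I y ↔ traceCon A I x y :=
  (traceCon A I).eq

lemma commute_trc_of_of {I : A → A → Prop} {a b : A} (hab : I a b) :
    Commute (trc A I (of a)) (trc A I (of b)) := by
  rw [Commute, SemiconjBy, ← trc_mul, ← trc_mul, trc_eq_trc_iff]
  exact ConGen.Rel.of _ _ ⟨a, b, hab, rfl, rfl⟩

lemma commute_trc_of_ofList {I : A → A → Prop} {a : A} {v : List A} (h : ∀ b ∈ v, I a b) :
    Commute (trc A I (of a)) (trc A I (ofList v)) := by
  induction v with
  | nil => exact Commute.one_right _
  | cons c v ih =>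
    rw [ofList_cons, trc_mul]
    exact (commute_trc_of_of (h c List.mem_cons_self)).mul_right
      (ih fun b hb => h b (List.mem_cons_of_mem _ hb))

def RecordsLetters (M : NFA' Q A) (α : Q → Set A) : Prop :=
  ∀ p a q, M.Δ p a q → α q = insert a (α p)

lemma RecordsLetters.eq_union_of_reaches {M : NFA' Q A} {α : Q → Set A}
    (hα : RecordsLetters M α) {p q : Q} {w : List A} (h : M.Reaches p w q) :
    α q = α p ∪ {a | a ∈ w} := by
  induction w generalizing p with
  | nil => cases (h : p = q); simp
  | cons a w ih =>
    obtain ⟨r, hpr, hrq⟩ := h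
    rw [ih hrq, hα p a r hpr]
    ext b
    simp only [Set.mem_union, Set.mem_insert_iff, Set.mem_ofPred_eq, List.mem_cons]
    tauto

lemma Memorizing.exists_recordsLetters {M : NFA' Q A} (hM : Memorizing M) :
    ∃ α, α M.q0 = ∅ ∧ RecordsLetters M α := by
  obtain ⟨hreach, α, hα⟩ := hM
  refine ⟨α, by simpa using hα [] M.q0 rfl, fun p a q hpq => ?_⟩
  obtain ⟨w, hw⟩ := hreach p
  have hwa : M.Reaches M.q0 (w ++ [a]) q := (M.reaches_append_singleton w a _ _).mpr ⟨p, hw, hpq⟩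
  rw [hα _ _ hwa, hα _ _ hw]
  ext b
  simp [or_comm]

def NFA'.traceConcat (I : A → A → Prop) (M₁ : NFA' Q₁ A) (M₂ : NFA' Q₂ A) (α : Q₂ → Set A) :
    NFA' (Q₁ × Q₂) A where
  Δ s a t := (M₁.Δ s.1 a t.1 ∧ t.2 = s.2 ∧ ∀ b ∈ α s.2, I a b) ∨ (M₂.Δ s.2 a t.2 ∧ t.1 = s.1)
  q0 := (M₁.q0, M₂.q0)
  F := M₁.F ×ˢ M₂.F

section traceConcat

variable {I : A → A → Prop} {M₁ : NFA' Q₁ A} {M₂ : NFA' Q₂ A} {α : Q₂ → Set A}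

lemma IDiamond.traceConcat (h₁ : IDiamond I M₁) (h₂ : IDiamond I M₂)
    (hα : RecordsLetters M₂ α) :
    IDiamond I (M₁.traceConcat I M₂ α) := by
  rintro a b ⟨p, q⟩ ⟨p₁, q₁⟩ ⟨p₂, q₂⟩ hab h₁a h₂b
  rcases h₁a with ⟨ha, hq₁ : q₁ = q, hIa⟩ | ⟨ha, hp₁ : p₁ = p⟩ <;>
    rcases h₂b with ⟨hb, hq₂ : q₂ = q₁, hIb⟩ | ⟨hb, hp₂ : p₂ = p₁⟩
  · subst q₁ q₂
    obtain ⟨m, hm₁, hm₂⟩ := h₁ a b p p₁ p₂ hab ha hb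
    exact ⟨(m, q), Or.inl ⟨hm₁, rfl, hIb⟩, Or.inl ⟨hm₂, rfl, hIa⟩⟩
  · subst q₁ p₂
    refine ⟨(p, q₂), Or.inr ⟨hb, rfl⟩, Or.inl ⟨ha, rfl, ?_⟩⟩
    rw [hα q b q₂ hb]
    rintro c (rfl | hc)
    exacts [hab, hIa c hc]
  · subst p₁ q₂
    refine ⟨(p₂, q), Or.inl ⟨hb, rfl, fun c hc => hIb c ?_⟩, Or.inr ⟨ha, rfl⟩⟩
    rw [hα q a q₁ ha]
    exact Set.mem_insert_of_mem a hc
  · subst p₁ p₂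
    obtain ⟨m, hm₁, hm₂⟩ := h₂ a b q q₁ q₂ hab ha hb
    exact ⟨(p, m), Or.inr ⟨hm₁, rfl⟩, Or.inr ⟨hm₂, rfl⟩⟩

lemma traceConcat_reaches_left {u : List A} {p p' : Q₁} (h : M₁.Reaches p u p') {q : Q₂}
    (hq : α q = ∅) : (M₁.traceConcat I M₂ α).Reaches (p, q) u (p', q) := by
  induction u generalizing p with
  | nil => exact congrArg (·, q) (h : p = p')
  | cons a u ih =>
    obtain ⟨r, hpr, hrp'⟩ := h
    exact ⟨(r, q), Or.inl ⟨hpr, rfl, by simp [hq]⟩, ih hrp'⟩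

lemma traceConcat_reaches_right {v : List A} {q q' : Q₂} (h : M₂.Reaches q v q') (p : Q₁) :
    (M₁.traceConcat I M₂ α).Reaches (p, q) v (p, q') := by
  induction v generalizing q with
  | nil => exact congrArg (p, ·) (h : q = q')
  | cons a v ih =>
    obtain ⟨r, hqr, hrq'⟩ := h
    exact ⟨(p, r), Or.inr ⟨hqr, rfl⟩, ih hrq'⟩

lemma exists_reaches_of_traceConcat_reaches (hα : RecordsLetters M₂ α) {w : List A}
    {s t : Q₁ × Q₂} (h : (M₁.traceConcat I M₂ α).Reaches s w t) :
    ∃ u v, M₁.Reaches s.1 u t.1 ∧ M₂.Reaches s.2 v t.2 ∧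
      trc A I (ofList w) = trc A I (ofList u) * trc A I (ofList v) := by
  induction w using List.reverseRecOn generalizing t with
  | nil => exact ⟨[], [], congrArg Prod.fst h, congrArg Prod.snd h, rfl⟩
  | append_singleton w a ih =>
    obtain ⟨r, hr, hrt⟩ := (NFA'.reaches_append_singleton _ _ _ _ _).mp h
    obtain ⟨u, v, hu, hv, hw⟩ := ih hr
    rcases hrt with ⟨ha, ht₂, hIa⟩ | ⟨ha, ht₁⟩
    · have hav : Commute (trc A I (of a)) (trc A I (ofList v)) :=
        commute_trc_of_ofList fun b hb => hIa b (by rw [hα.eq_union_of_reaches hv]; exact Or.inr hb)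
      refine ⟨u ++ [a], v, (NFA'.reaches_append_singleton _ _ _ _ _).mpr ⟨r.1, hu, ha⟩,
        ht₂ ▸ hv, ?_⟩
      simp only [ofList_append, ofList_singleton, trc_mul, hw, mul_assoc, hav.eq]
    · refine ⟨u, v ++ [a], ht₁ ▸ hu,
        (NFA'.reaches_append_singleton _ _ _ _ _).mpr ⟨r.2, hv, ha⟩, ?_⟩
      simp only [ofList_append, trc_mul, hw, mul_assoc]

lemma traceConcat_lang (hsym : ∀ a b, I a b → I b a) (h₁ : IDiamond I M₁) (h₂ : IDiamond I M₂)
    (hα₀ : α M₂.q0 = ∅) (hα : RecordsLetters M₂ α) :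
    (M₁.traceConcat I M₂ α).lang =
      pcClosure A I {w | ∃ u ∈ M₁.lang, ∃ v ∈ M₂.lang, w = u ++ v} := by
  ext w
  constructor
  · rintro ⟨⟨p, q⟩, ⟨hp, hq⟩, hw⟩
    obtain ⟨u, v, hu, hv, huv⟩ := exists_reaches_of_traceConcat_reaches hα hw
    refine ⟨u ++ v, ⟨u, ⟨p, hp, hu⟩, v, ⟨q, hq, hv⟩, rfl⟩, trc_eq_trc_iff.mp ?_⟩
    rw [huv, ofList_append, trc_mul]
  · rintro ⟨_, ⟨u, ⟨p, hp, hu⟩, v, ⟨q, hq, hv⟩, rfl⟩, hw⟩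
    refine (h₁.traceConcat h₂ hα).lang_traceCon hsym hw ⟨(p, q), ⟨hp, hq⟩, ?_⟩
    exact (NFA'.reaches_append _ _ _ _ _).mpr
      ⟨(p, M₂.q0), traceConcat_reaches_left hu hα₀, traceConcat_reaches_right hv p⟩

end traceConcat

theorem idiamond_product_general (A Q₁ Q₂ : Type)
    (I : A → A → Prop) (hsym : ∀ a b, I a b → I b a)
    (M₁ : NFA' Q₁ A) (M₂ : NFA' Q₂ A)
    (h₁ : IDiamond I M₁) (h₂ : IDiamond I M₂) (hmem : Memorizing M₂) :
    ∃ M : NFA' (Q₁ × Q₂) A, IDiamond I M ∧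
      M.lang = pcClosure A I {w | ∃ u ∈ M₁.lang, ∃ v ∈ M₂.lang, w = u ++ v} := by
  obtain ⟨α, hα₀, hα⟩ := hmem.exists_recordsLetters
  exact ⟨M₁.traceConcat I M₂ α, h₁.traceConcat h₂ hα, traceConcat_lang hsym h₁ h₂ hα₀ hα⟩

/-- The closure of the product of an I-diamond language with a memorizing
I-diamond language is accepted by an I-diamond NFA with n₁·n₂ states. -/
theorem idiamond_product (A Q₁ Q₂ : Type) [Fintype A] [Fintype Q₁] [Fintype Q₂]
    (I : A → A → Prop) (hirr : ∀ a, ¬ I a a) (hsym : ∀ a b, I a b → I b a)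
    (M₁ : NFA' Q₁ A) (M₂ : NFA' Q₂ A)
    (h₁ : IDiamond I M₁) (h₂ : IDiamond I M₂) (hmem : Memorizing M₂) :
    ∃ M : NFA' (Q₁ × Q₂) A, IDiamond I M ∧
      M.lang = pcClosure A I {w | ∃ u ∈ M₁.lang, ∃ v ∈ M₂.lang, w = u ++ v} :=
  idiamond_product_general A Q₁ Q₂ I hsym M₁ M₂ h₁ h₂ hmem
end
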